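/- Suppose ‖L‖ ≤ η̄‖R(X)‖ and β ∈ (0, 1−η̄). Then the sufficient decrease condition ‖R(X+ξS)‖ ≤ (1−ξβ)‖R(X)‖ holds for all step sizes ξ with 0 < ξ ≤ (1−η̄−β)‖R(X)‖/‖MSBBᵀSM‖, where R(X+ξS) = (1−ξ)R(X) + ξL − ξ²MSBBᵀSM and L = R'(X)S + R(X). -/

import Mathlib

/-!
Since `R` is quadratic, its Taylor expansion at `X` in direction `S` is exact:
`R(X + ξS) = R(X) + ξ R'(X)S - ξ² MSBBᵀSM`, which is `(1-ξ)R(X) + ξL - ξ²MSBBᵀSM`.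
The triangle inequality bounds the three terms by `(1-ξ)‖R(X)‖`, `ξη‖R(X)‖` and, by the
step size restriction, `ξ(1-η-β)‖R(X)‖`; they add up to `(1-ξβ)‖R(X)‖`.
-/

open Matrix

attribute [local instance] Matrix.frobeniusSeminormedAddCommGroup
attribute [local instance] Matrix.frobeniusNormedAddCommGroup
attribute [local instance] Matrix.frobeniusNormedSpace

section Riccati

variable {ι κ ν 𝕜 : Type*} [Fintype ι] [Fintype κ] [Fintype ν] [CommRing 𝕜]

def riccatiMap (A M : Matrix ι ι 𝕜) (B : Matrix ι κ 𝕜) (C : Matrix ν ι 𝕜)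
    (Y : Matrix ι ι 𝕜) : Matrix ι ι 𝕜 :=
  Cᵀ * C + Aᵀ * Y * M + M * Y * A - M * Y * B * Bᵀ * Y * M

/-- The Fréchet derivative `R'(X)S` of `riccatiMap` at a symmetric `X`. -/
def riccatiDeriv (A M : Matrix ι ι 𝕜) (B : Matrix ι κ 𝕜) (X S : Matrix ι ι 𝕜) :
    Matrix ι ι 𝕜 :=
  (A - B * Bᵀ * X * M)ᵀ * S * M + M * S * (A - B * Bᵀ * X * M)

theorem riccatiMap_add_smul (A M : Matrix ι ι 𝕜) (B : Matrix ι κ 𝕜) (C : Matrix ν ι 𝕜)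
    {X : Matrix ι ι 𝕜} (hM : Mᵀ = M) (hX : Xᵀ = X) (S : Matrix ι ι 𝕜) (ξ : 𝕜) :
    riccatiMap A M B C (X + ξ • S) =
      riccatiMap A M B C X + ξ • riccatiDeriv A M B X S - ξ ^ 2 • (M * S * B * Bᵀ * S * M) := by
  simp only [riccatiMap, riccatiDeriv, transpose_mul, transpose_sub, transpose_transpose, hM, hX,
    Matrix.add_mul, Matrix.mul_add, Matrix.smul_mul, Matrix.mul_smul, Matrix.sub_mul, Matrix.mul_sub,
    Matrix.mul_assoc, smul_sub, smul_add, smul_smul]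
  module

end Riccati

theorem norm_damped_step_le {E : Type*} [SeminormedAddCommGroup E] [NormedSpace ℝ E]
    {r l N : E} {η β ξ : ℝ} (hl : ‖l‖ ≤ η * ‖r‖) (hξ0 : 0 ≤ ξ) (hξ1 : ξ ≤ 1)
    (hN : ξ * ‖N‖ ≤ (1 - η - β) * ‖r‖) :
    ‖(1 - ξ) • r + ξ • l - ξ ^ 2 • N‖ ≤ (1 - ξ * β) * ‖r‖ := by
  have htri : ‖(1 - ξ) • r + ξ • l - ξ ^ 2 • N‖ ≤ (1 - ξ) * ‖r‖ + ξ * ‖l‖ + ξ ^ 2 * ‖N‖ := by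
    calc ‖(1 - ξ) • r + ξ • l - ξ ^ 2 • N‖
        ≤ ‖(1 - ξ) • r‖ + ‖ξ • l‖ + ‖ξ ^ 2 • N‖ := norm_sub_le_of_le (norm_add_le _ _) le_rfl
      _ = (1 - ξ) * ‖r‖ + ξ * ‖l‖ + ξ ^ 2 * ‖N‖ := by
        rw [norm_smul, norm_smul, norm_smul, Real.norm_of_nonneg (sub_nonneg.2 hξ1),
          Real.norm_of_nonneg hξ0, Real.norm_of_nonneg (sq_nonneg ξ)]
  nlinarith [mul_le_mul_of_nonneg_left hl hξ0, mul_le_mul_of_nonneg_left hN hξ0]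

theorem stmt_11_general {n m q : ℕ}
    (A M X S : Matrix (Fin n) (Fin n) ℝ)
    (B : Matrix (Fin n) (Fin m) ℝ) (C : Matrix (Fin q) (Fin n) ℝ)
    (hM : Mᵀ = M) (hX : Xᵀ = X)
    (R : Matrix (Fin n) (Fin n) ℝ → Matrix (Fin n) (Fin n) ℝ)
    (hR : ∀ Y, R Y = Cᵀ * C + Aᵀ * Y * M + M * Y * A - M * Y * B * Bᵀ * Y * M)
    (L : Matrix (Fin n) (Fin n) ℝ)
    (hL : L = (A - B * Bᵀ * X * M)ᵀ * S * M + M * S * (A - B * Bᵀ * X * M) + R X)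
    (η β : ℝ) (hβ1 : β < 1 - η)
    (hLsmall : ‖L‖ ≤ η * ‖R X‖)
    (ξ : ℝ) (hξ0 : 0 < ξ) (hξ1 : ξ ≤ 1)
    (hξ : ξ ≤ (1 - η - β) * ‖R X‖ / ‖M * S * B * Bᵀ * S * M‖) :
    ‖R (X + ξ • S)‖ ≤ (1 - ξ * β) * ‖R X‖ := by
  obtain rfl : R = riccatiMap A M B C := funext hR
  have hexpand : riccatiMap A M B C (X + ξ • S) =
      (1 - ξ) • riccatiMap A M B C X + ξ • L - ξ ^ 2 • (M * S * B * Bᵀ * S * M) := by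
    rw [riccatiMap_add_smul A M B C hM hX, hL]
    simp only [riccatiDeriv]
    module
  rw [hexpand]
  refine norm_damped_step_le hLsmall hξ0.le hξ1 (mul_le_of_le_div₀ ?_ (norm_nonneg _) hξ)
  exact mul_nonneg (by linarith) (norm_nonneg _)

theorem stmt_11 {n m q : ℕ}
    (A M X S : Matrix (Fin n) (Fin n) ℝ)
    (B : Matrix (Fin n) (Fin m) ℝ) (C : Matrix (Fin q) (Fin n) ℝ)
    (hM : Mᵀ = M) (hX : Xᵀ = X) (hS : Sᵀ = S)
    (R : Matrix (Fin n) (Fin n) ℝ → Matrix (Fin n) (Fin n) ℝ)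
    (hR : ∀ Y, R Y = Cᵀ * C + Aᵀ * Y * M + M * Y * A - M * Y * B * Bᵀ * Y * M)
    (L : Matrix (Fin n) (Fin n) ℝ)
    (hL : L = (A - B * Bᵀ * X * M)ᵀ * S * M + M * S * (A - B * Bᵀ * X * M) + R X)
    (η β : ℝ) (hη : 0 < η) (hη1 : η < 1) (hβ : 0 < β) (hβ1 : β < 1 - η)
    (hLsmall : ‖L‖ ≤ η * ‖R X‖)
    (hNne : M * S * B * Bᵀ * S * M ≠ 0)
    (ξ : ℝ) (hξ0 : 0 < ξ) (hξ1 : ξ ≤ 1)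
    (hξ : ξ ≤ (1 - η - β) * ‖R X‖ / ‖M * S * B * Bᵀ * S * M‖) :
    ‖R (X + ξ • S)‖ ≤ (1 - ξ * β) * ‖R X‖ :=
  stmt_11_general A M X S B C hM hX R hR L hL η β hβ1 hLsmall ξ hξ0 hξ1 hξ
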